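/- arXiv:2505.02423 — 2 statements merged into one kernel-verified Lean document; each statement's English description precedes it below -/
import Mathlib

section
/- [Pole-Shifting Theorem] Let A ∈ ℝ^{n×n} and B ∈ ℝ^{n×p}. The pair (A,B) is controllable if and only if every monic polynomial χ of degree n with real coefficients is assignable to (A,B), i.e., there exists F ∈ ℝ^{p×n} such that the characteristic polynomial of A + BF equals χ. -/
open Matrix Polynomial

/-- The Kalman matrix `M = [B, AB, …, A^{n−1}B]`. -/
noncomputable def kalmanMatrix {n p : ℕ} (A : Matrix (Fin n) (Fin n) ℝ)
    (B : Matrix (Fin n) (Fin p) ℝ) : Matrix (Fin n) (Fin n × Fin p) ℝ :=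
  Matrix.of fun i jk => (A ^ (jk.1 : ℕ) * B) i jk.2


namespace PoleShift

variable {n : ℕ}

lemma sum_mulVec {ι : Type*} (s : Finset ι) (M : ι → Matrix (Fin n) (Fin n) ℝ)
    (v : Fin n → ℝ) : (∑ i ∈ s, M i) *ᵥ v = ∑ i ∈ s, (M i) *ᵥ v := by
  induction s using Finset.cons_induction with
  | empty => simp
  | cons a s ha ih => simp [Finset.sum_cons, Matrix.add_mulVec, ih]

lemma vecMulVec_mulVec (v f w : Fin n → ℝ) :
    (vecMulVec v f) *ᵥ w = (f ⬝ᵥ w) • v := by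
  ext i
  simp [Matrix.mulVec, dotProduct, vecMulVec_apply, Finset.mul_sum, mul_comm,
    mul_left_comm]

end PoleShift

namespace PoleShift
open Submodule

lemma mulVec_sum' {n : ℕ} (M : Matrix (Fin n) (Fin n) ℝ) (s : Finset ℕ) (x : ℕ → Fin n → ℝ) :
    M *ᵥ (∑ i ∈ s, x i) = ∑ i ∈ s, M *ᵥ x i := by
  induction s using Finset.cons_induction with
  | empty => simp
  | cons a s ha ih => rw [Finset.sum_cons, Finset.sum_cons, Matrix.mulVec_add, ih]

lemma single_input {n : ℕ} (hn : 0 < n) (A : Matrix (Fin n) (Fin n) ℝ) (v : Fin n → ℝ)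
    (hspan : ⊤ ≤ Submodule.span ℝ (Set.range fun i : Fin n => (A ^ (i : ℕ)) *ᵥ v))
    (χ : Polynomial ℝ) (hm : χ.Monic) (hd : χ.natDegree = n) :
    ∃ f : Fin n → ℝ, (A + vecMulVec v f).charpoly = χ := by
  set a : ℕ → ℝ := fun i => A.charpoly.coeff i with ha_def
  have hcard : Fintype.card (Fin n) = n := Fintype.card_fin n
  have hAdeg : A.charpoly.natDegree = n := by
    rw [Matrix.charpoly_natDegree_eq_dim, hcard]
  have haN : a n = 1 := by
    have h := (Matrix.charpoly_monic A).coeff_natDegree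
    rwa [hAdeg] at h
  set e : ℕ → (Fin n → ℝ) :=
    fun k => ∑ i ∈ Finset.range (n - k), a (k + 1 + i) • ((A ^ i) *ᵥ v) with he_def
  have hLHS : ∀ k, A *ᵥ e k =
      ∑ i ∈ Finset.range (n - k), a (k + 1 + i) • ((A ^ (i+1)) *ᵥ v) := by
    intro k
    rw [he_def, mulVec_sum']
    refine Finset.sum_congr rfl fun i _ => ?_
    rw [Matrix.mulVec_smul, Matrix.mulVec_mulVec, ← pow_succ']
  have hE1 : ∀ k, A *ᵥ e (k + 1) = e k - a (k + 1) • v := by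
    intro k
    by_cases hk : k < n
    · have h1 : n - k = (n - (k+1)) + 1 := by omega
      rw [hLHS, he_def]
      simp only [h1, Finset.sum_range_succ']
      simp only [pow_zero, Matrix.one_mulVec, Nat.add_zero]
      rw [add_sub_cancel_right]
      refine Finset.sum_congr rfl fun i _ => ?_
      rw [show k + 1 + (i + 1) = k + 1 + 1 + i by omega]
    · have h0 : n - k = 0 := by omega
      have h0' : n - (k+1) = 0 := by omega
      have ha0 : a (k+1) = 0 :=
        Polynomial.coeff_eq_zero_of_natDegree_lt (by omega : A.charpoly.natDegree < k + 1)
      rw [hLHS, he_def]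
      simp [h0, h0', ha0]
  have hCH : ∑ i ∈ Finset.range (n+1), a i • ((A ^ i) *ᵥ v) = 0 := by
    have h := Matrix.aeval_self_charpoly A
    have h2 := Polynomial.aeval_eq_sum_range (p := A.charpoly) A
    rw [hAdeg, h] at h2
    calc ∑ i ∈ Finset.range (n+1), a i • ((A ^ i) *ᵥ v)
        = (∑ i ∈ Finset.range (n+1), a i • A ^ i) *ᵥ v := by
          rw [sum_mulVec]
          exact Finset.sum_congr rfl fun i _ => (smul_mulVec _ _ _).symm
      _ = 0 := by rw [← h2, Matrix.zero_mulVec]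
  have hE0 : A *ᵥ e 0 = -(a 0 • v) := by
    rw [Finset.sum_range_succ'] at hCH
    simp only [pow_zero, Matrix.one_mulVec] at hCH
    have : A *ᵥ e 0 + a 0 • v = 0 := by
      rw [hLHS]
      simp only [Nat.sub_zero]
      rw [← hCH]
      congr 1
      exact Finset.sum_congr rfl fun i _ => by rw [show 0 + 1 + i = i + 1 by omega]
    exact eq_neg_of_add_eq_zero_left this
  -- the vectors e 0, ..., e (n-1) span everything
  have hEspan : ∀ m, m < n →
      (A ^ m) *ᵥ v ∈ Submodule.span ℝ (Set.range fun k : Fin n => e (k : ℕ)) := by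
    intro m
    induction m using Nat.strong_induction_on with
    | _ m ih =>
      intro hm
      have h1 : n - (n - 1 - m) = m + 1 := by omega
      have hkey : (A ^ m) *ᵥ v = e (n - 1 - m)
          - ∑ i ∈ Finset.range m, a ((n - 1 - m) + 1 + i) • ((A ^ i) *ᵥ v) := by
        rw [he_def]
        simp only [h1, Finset.sum_range_succ]
        rw [show n - 1 - m + 1 + m = n by omega, haN, one_smul]
        abel
      rw [hkey]
      refine sub_mem (Submodule.subset_span ⟨⟨n - 1 - m, by omega⟩, rfl⟩)
        (Submodule.sum_mem _ fun i hi => Submodule.smul_mem _ _ ?_)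
      have him : i < m := Finset.mem_range.mp hi
      exact ih i him (by omega)
  have hEtop : ⊤ ≤ Submodule.span ℝ (Set.range fun k : Fin n => e (k : ℕ)) := by
    refine le_trans hspan (Submodule.span_le.mpr ?_)
    rintro x ⟨i, rfl⟩
    exact hEspan i i.isLt
  have hfin : Fintype.card (Fin n) = Module.finrank ℝ (Fin n → ℝ) := by
    simp [Module.finrank_fintype_fun_eq_card]
  let bas : Module.Basis (Fin n) ℝ (Fin n → ℝ) :=
    basisOfTopLeSpanOfCardEqFinrank (fun k : Fin n => e (k : ℕ)) hEtop hfin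
  have hbas : ⇑bas = fun k : Fin n => e (k : ℕ) :=
    coe_basisOfTopLeSpanOfCardEqFinrank _ _ _
  set b : ℕ → ℝ := fun i => χ.coeff i with hb_def
  have hbN : b n = 1 := by
    have h := hm.coeff_natDegree
    rwa [hd] at h
  set φ : (Fin n → ℝ) →ₗ[ℝ] ℝ := bas.constr ℝ (fun k : Fin n => a (k : ℕ) - b (k : ℕ))
    with hφ_def
  have hφ : ∀ k : Fin n, φ (e (k : ℕ)) = a (k : ℕ) - b (k : ℕ) := by
    intro k
    have h1 : e (k : ℕ) = bas k := (congrFun hbas k).symm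
    rw [h1, hφ_def]
    exact bas.constr_basis ℝ _ k
  set f : Fin n → ℝ := fun j => φ (Pi.single j 1) with hf_def
  have hf : ∀ w : Fin n → ℝ, f ⬝ᵥ w = φ w := by
    intro w
    have hw : ∑ j, w j • (Pi.single j 1 : Fin n → ℝ) = w := by
      have h1 : ∀ j, w j • (Pi.single j 1 : Fin n → ℝ) = Pi.single j (w j) := by
        intro j; ext i; by_cases h : i = j <;> simp [h, Pi.single_apply]
      simp only [h1, Finset.univ_sum_single]
    calc f ⬝ᵥ w = ∑ j, w j • φ ((Pi.single j 1 : Fin n → ℝ)) := by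
          simp [dotProduct, hf_def, mul_comm, smul_eq_mul]
      _ = φ (∑ j, w j • (Pi.single j 1 : Fin n → ℝ)) := by rw [map_sum]; simp
      _ = φ w := by rw [hw]
  set g := A + vecMulVec v f with hg_def
  have hgmul : ∀ w, g *ᵥ w = A *ᵥ w + φ w • v := by
    intro w
    rw [hg_def, Matrix.add_mulVec, vecMulVec_mulVec, hf]
  have hgLHS : ∀ (m : ℕ) (c : ℕ → ℝ), g *ᵥ (∑ i ∈ Finset.range m, c i • ((g ^ i) *ᵥ v)) =
      ∑ i ∈ Finset.range m, c i • ((g ^ (i+1)) *ᵥ v) := by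
    intro m c
    rw [mulVec_sum']
    refine Finset.sum_congr rfl fun i _ => ?_
    rw [Matrix.mulVec_smul, Matrix.mulVec_mulVec, ← pow_succ']
  have hC1 : ∀ j, j ≤ n - 1 → e (n - 1 - j) =
      ∑ i ∈ Finset.range (n - (n - 1 - j)), b ((n - 1 - j) + 1 + i) • ((g ^ i) *ᵥ v) := by
    intro j
    induction j with
    | zero =>
      intro _
      have h1 : n - (n - 1 - 0) = 1 := by omega
      have h2 : n - 1 - 0 + 1 + 0 = n := by omega
      rw [he_def]
      simp only [h1, Finset.sum_range_one, Nat.add_zero]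
      rw [show n - 1 - 0 + 1 = n by omega, haN, hbN]
      simp
    | succ j ihj =>
      intro hj
      have hk1 : n - 1 - (j + 1) + 1 = n - 1 - j := by omega
      have hkn : n - 1 - (j + 1) + 1 < n := by omega
      set k := n - 1 - (j + 1) with hk
      have h3 : φ (e (k + 1)) = a (k + 1) - b (k + 1) := by
        have h := hφ ⟨k + 1, hkn⟩
        simpa using h
      have hek : e k = g *ᵥ e (k + 1) + b (k + 1) • v := by
        have h2 := hgmul (e (k + 1))
        rw [h3, hE1 k] at h2
        rw [h2]
        module
      have hih : e (k + 1) = ∑ i ∈ Finset.range (n - (k+1)), b ((k+1) + 1 + i) • ((g ^ i) *ᵥ v) := by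
        rw [hk1]
        exact ihj (by omega)
      rw [hek, hih, hgLHS]
      have h4 : n - k = (n - (k+1)) + 1 := by omega
      rw [h4, Finset.sum_range_succ']
      simp only [pow_zero, Matrix.one_mulVec, Nat.add_zero]
      congr 1
      refine Finset.sum_congr rfl fun i _ => ?_
      rw [show k + 1 + (i + 1) = k + 1 + 1 + i by omega]
  have he0 : e 0 = ∑ i ∈ Finset.range n, b (1 + i) • ((g ^ i) *ᵥ v) := by
    have h := hC1 (n - 1) le_rfl
    rw [show n - 1 - (n - 1) = 0 by omega] at h
    simpa using h
  have hrel : ∑ i ∈ Finset.range (n+1), b i • ((g ^ i) *ᵥ v) = 0 := by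
    have h2 : φ (e 0) = a 0 - b 0 := by
      have h := hφ ⟨0, hn⟩
      simpa using h
    have h3 : g *ᵥ e 0 = -(b 0 • v) := by
      rw [hgmul, h2, hE0]
      module
    have h4 : g *ᵥ e 0 = ∑ i ∈ Finset.range n, b (1 + i) • ((g ^ (i+1)) *ᵥ v) := by
      rw [he0, hgLHS]
    rw [Finset.sum_range_succ']
    simp only [pow_zero, Matrix.one_mulVec]
    have h5 : ∑ k ∈ Finset.range n, b (k + 1) • ((g ^ (k+1)) *ᵥ v)
        = ∑ k ∈ Finset.range n, b (1 + k) • ((g ^ (k+1)) *ᵥ v) :=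
      Finset.sum_congr rfl fun i _ => by rw [Nat.add_comm 1 i]
    rw [h5, ← h4, h3, neg_add_cancel]
  have haev : (aeval g χ) *ᵥ v = 0 := by
    have h2 : aeval g χ = ∑ i ∈ Finset.range (n+1), b i • g ^ i := by
      have h := Polynomial.aeval_eq_sum_range (p := χ) g
      rwa [hd] at h
    rw [h2, sum_mulVec, ← hrel]
    exact Finset.sum_congr rfl fun i _ => smul_mulVec _ _ _
  have hgspan : ⊤ ≤ Submodule.span ℝ (Set.range fun i : Fin n => (g ^ (i : ℕ)) *ᵥ v) := by
    refine le_trans hEtop (Submodule.span_le.mpr ?_)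
    rintro x ⟨k, rfl⟩
    show e (k : ℕ) ∈ _
    have hkn : (k : ℕ) = n - 1 - (n - 1 - (k : ℕ)) := by omega
    rw [show e (k : ℕ) = e (n - 1 - (n - 1 - (k : ℕ))) by rw [← hkn]]
    rw [hC1 (n - 1 - (k : ℕ)) (by omega)]
    refine Submodule.sum_mem _ fun i hi => Submodule.smul_mem _ _ ?_
    have hin : i < n := by
      have := Finset.mem_range.mp hi
      omega
    exact Submodule.subset_span ⟨⟨i, hin⟩, rfl⟩
  have hcomm : ∀ i : ℕ, aeval g χ * g ^ i = g ^ i * aeval g χ := by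
    intro i
    have h : Commute (aeval g χ) g := by
      have h2 := (Commute.all χ (X : ℝ[X])).map (aeval g)
      rwa [Polynomial.aeval_X] at h2
    exact h.pow_right i
  have hzero : ∀ x : Fin n → ℝ, (aeval g χ) *ᵥ x = 0 := by
    intro x
    have hx : x ∈ Submodule.span ℝ (Set.range fun i : Fin n => (g ^ (i : ℕ)) *ᵥ v) :=
      hgspan trivial
    induction hx using Submodule.span_induction with
    | mem y hy =>
      obtain ⟨i, rfl⟩ := hy
      rw [Matrix.mulVec_mulVec, hcomm, ← Matrix.mulVec_mulVec, haev, Matrix.mulVec_zero]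
    | zero => simp
    | add y z _ _ hy hz => rw [Matrix.mulVec_add, hy, hz, add_zero]
    | smul c y _ hy => rw [Matrix.mulVec_smul, hy, smul_zero]
  have hN : aeval g χ = 0 := by
    ext i j
    have h := congrFun (hzero (Pi.single j 1)) i
    rw [Matrix.mulVec_single] at h
    simpa using h
  -- minpoly argument
  have hint : IsIntegral ℝ g := Matrix.isIntegral g
  set μ := minpoly ℝ g with hμ_def
  have hμmonic : μ.Monic := minpoly.monic hint
  have hμdvdχ : μ ∣ χ := minpoly.dvd ℝ g hN
  have hμdvdc : μ ∣ g.charpoly := minpoly.dvd ℝ g (Matrix.aeval_self_charpoly g)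
  have hli : LinearIndependent ℝ (fun i : Fin n => (g ^ (i : ℕ)) *ᵥ v) := by
    have hb2 := (basisOfTopLeSpanOfCardEqFinrank
      (fun i : Fin n => (g ^ (i : ℕ)) *ᵥ v) hgspan hfin).linearIndependent
    rwa [coe_basisOfTopLeSpanOfCardEqFinrank] at hb2
  have hdegμ : n ≤ μ.natDegree := by
    by_contra hlt
    push_neg at hlt
    have hrel2 : ∑ i ∈ Finset.range (μ.natDegree + 1), μ.coeff i • ((g ^ i) *ᵥ v) = 0 := by
      have h0 : aeval g μ = 0 := minpoly.aeval ℝ g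
      have h2 : aeval g μ = ∑ i ∈ Finset.range (μ.natDegree + 1), μ.coeff i • g ^ i :=
        Polynomial.aeval_eq_sum_range g
      calc ∑ i ∈ Finset.range (μ.natDegree + 1), μ.coeff i • ((g ^ i) *ᵥ v)
          = (aeval g μ) *ᵥ v := by
            rw [h2, sum_mulVec]
            exact Finset.sum_congr rfl fun i _ => (smul_mulVec _ _ _).symm
        _ = 0 := by rw [h0, Matrix.zero_mulVec]
    have hsum : ∑ i : Fin n, (if (i : ℕ) < μ.natDegree + 1 then μ.coeff (i : ℕ) else 0)
        • ((g ^ (i : ℕ)) *ᵥ v) = 0 := by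
      rw [Fin.sum_univ_eq_sum_range
        (fun i => (if i < μ.natDegree + 1 then μ.coeff i else 0) • ((g ^ i) *ᵥ v)) n]
      rw [← Finset.sum_subset (Finset.range_subset_range.mpr (by omega : μ.natDegree + 1 ≤ n))
        (fun i _ hi => by rw [if_neg (by simpa using hi), zero_smul])]
      rw [← hrel2]
      exact Finset.sum_congr rfl fun i hi => by rw [if_pos (Finset.mem_range.mp hi)]
    have hall := Fintype.linearIndependent_iff.mp hli _ hsum ⟨μ.natDegree, hlt⟩
    rw [show (((⟨μ.natDegree, hlt⟩ : Fin n) : ℕ)) = μ.natDegree from rfl,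
      if_pos (Nat.lt_succ_self μ.natDegree)] at hall
    have hlc := hμmonic.coeff_natDegree
    rw [hall] at hlc
    exact zero_ne_one hlc
  have hmain : ∀ q : Polynomial ℝ, q.Monic → q.natDegree = n → μ ∣ q → q = μ := by
    intro q hqm hqd hdvd
    obtain ⟨r, hr⟩ := hdvd
    have hq0 : q ≠ 0 := hqm.ne_zero
    have hμ0 : μ ≠ 0 := hμmonic.ne_zero
    have hr0 : r ≠ 0 := by
      rintro rfl
      rw [mul_zero] at hr
      exact hq0 hr
    have hdd : q.natDegree = μ.natDegree + r.natDegree := by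
      rw [hr, Polynomial.natDegree_mul hμ0 hr0]
    have hrd : r.natDegree = 0 := by omega
    have hrC : r = Polynomial.C (r.coeff 0) := Polynomial.eq_C_of_natDegree_eq_zero hrd
    have hlead : (1:ℝ) = r.coeff 0 := by
      have h := congrArg Polynomial.leadingCoeff hr
      rw [Polynomial.leadingCoeff_mul, hqm.leadingCoeff, hμmonic.leadingCoeff, one_mul] at h
      rw [h, Polynomial.leadingCoeff, hrd]
    have hr1 : r = 1 := by rw [hrC, ← hlead, Polynomial.C_1]
    rw [hr, hr1, mul_one]
  have h1 : χ = μ := hmain χ hm hd hμdvdχ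
  have h2 : g.charpoly = μ := by
    refine hmain _ (Matrix.charpoly_monic g) ?_ hμdvdc
    rw [Matrix.charpoly_natDegree_eq_dim, hcard]
  exact ⟨f, by rw [← hg_def, h2, h1]⟩


lemma forward {n p : ℕ} (hn : 0 < n) (A : Matrix (Fin n) (Fin n) ℝ)
    (B : Matrix (Fin n) (Fin p) ℝ) (hrank : (kalmanMatrix A B).rank = n)
    (χ : Polynomial ℝ) (hm : χ.Monic) (hd : χ.natDegree = n) :
    ∃ F : Matrix (Fin p) (Fin n) ℝ, (A + B * F).charpoly = χ := by
  haveI : Nonempty (Fin n) := ⟨⟨0, hn⟩⟩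
  have hfin : Fintype.card (Fin n) = Module.finrank ℝ (Fin n → ℝ) := by
    simp [Module.finrank_fintype_fun_eq_card]
  -- the range of the Kalman matrix is everything
  have h1 : LinearMap.range (kalmanMatrix A B).mulVecLin = ⊤ := by
    apply Submodule.eq_top_of_finrank_eq
    rw [Module.finrank_fintype_fun_eq_card, Fintype.card_fin]
    exact hrank
  have hS : ⊤ ≤ Submodule.span ℝ
      {x : Fin n → ℝ | ∃ (k : ℕ) (w : Fin p → ℝ), x = (A ^ k) *ᵥ (B *ᵥ w)} := by
    rw [← h1, Matrix.range_mulVecLin]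
    refine Submodule.span_le.mpr fun y hy => Submodule.subset_span ?_
    obtain ⟨⟨k, j⟩, rfl⟩ := hy
    refine ⟨(k : ℕ), Pi.single j 1, ?_⟩
    ext i
    rw [Matrix.mulVec_mulVec, Matrix.mulVec_single]
    simp [kalmanMatrix, Matrix.transpose_apply]
  -- any A-invariant subspace containing the range of B is everything
  have hinv : ∀ W : Submodule ℝ (Fin n → ℝ), (∀ y ∈ W, A *ᵥ y ∈ W) →
      (∀ w, B *ᵥ w ∈ W) → W = ⊤ := by
    intro W hW hB
    rw [eq_top_iff]
    refine le_trans hS (Submodule.span_le.mpr ?_)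
    rintro y ⟨k, w, rfl⟩
    induction k with
    | zero => simpa [pow_zero, Matrix.one_mulVec] using hB w
    | succ k ih =>
      rw [pow_succ', ← Matrix.mulVec_mulVec]
      exact hW _ ih
  -- build a controllability chain of length n
  have hchain : ∀ k, k ≤ n → ∃ (x : ℕ → Fin n → ℝ) (u : ℕ → Fin p → ℝ),
      x 0 = 0 ∧ (∀ m < k, x (m+1) = A *ᵥ x m + B *ᵥ u (m+1)) ∧
      LinearIndependent ℝ (fun i : Fin k => x ((i : ℕ)+1)) := by
    intro k
    induction k with
    | zero =>
      exact fun _ => ⟨fun _ => 0, fun _ => 0, rfl, by omega, linearIndependent_empty_type⟩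
    | succ k ih =>
      intro hk
      obtain ⟨x, u, hx0, hch, hli⟩ := ih (by omega)
      set W := Submodule.span ℝ (Set.range fun i : Fin k => x ((i:ℕ)+1)) with hW_def
      have hWne : W ≠ ⊤ := by
        intro hWtop
        have hle : n ≤ k := by
          have h3 : Module.finrank ℝ (Fin n → ℝ) ≤ k :=
            calc Module.finrank ℝ (Fin n → ℝ)
                = Module.finrank ℝ (⊤ : Submodule ℝ (Fin n → ℝ)) := (finrank_top _ _).symm
              _ = Module.finrank ℝ W := by rw [hWtop]
              _ ≤ Fintype.card (Fin k) := finrank_range_le_card _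
              _ = k := Fintype.card_fin k
          rwa [Module.finrank_fintype_fun_eq_card, Fintype.card_fin] at h3
        omega
      -- there is a way to leave W
      have hex : ∃ w : Fin p → ℝ, A *ᵥ x k + B *ᵥ w ∉ W := by
        by_contra hall
        push_neg at hall
        have hAxk : A *ᵥ x k ∈ W := by
          have h := hall 0
          simpa [Matrix.mulVec_zero] using h
        have hBu : ∀ w, B *ᵥ w ∈ W := by
          intro w
          have h := W.sub_mem (hall w) hAxk
          simpa using h
        have hWinv : ∀ y ∈ W, A *ᵥ y ∈ W := by
          intro y hy
          induction hy using Submodule.span_induction with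
          | mem z hz =>
            obtain ⟨i, rfl⟩ := hz
            show A *ᵥ x ((i:ℕ)+1) ∈ W
            by_cases hik : (i : ℕ) + 1 = k
            · rw [show ((i:ℕ)+1) = k from hik]
              exact hAxk
            · have hik2 : (i : ℕ) + 1 < k := by
                have := i.isLt
                omega
              have h2 := hch ((i:ℕ)+1) hik2
              have h3 : A *ᵥ x ((i:ℕ)+1) = x ((i:ℕ)+2) - B *ᵥ u ((i:ℕ)+2) := by
                rw [h2]
                abel
              rw [h3]
              exact W.sub_mem (Submodule.subset_span ⟨⟨(i:ℕ)+1, hik2⟩, rfl⟩) (hBu _)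
          | zero => simp
          | add y z _ _ hy hz => rw [Matrix.mulVec_add]; exact W.add_mem hy hz
          | smul c y _ hy => rw [Matrix.mulVec_smul]; exact W.smul_mem c hy
        exact hWne (hinv W hWinv hBu)
      obtain ⟨w, hw⟩ := hex
      refine ⟨Function.update x (k+1) (A *ᵥ x k + B *ᵥ w),
        Function.update u (k+1) w, ?_, ?_, ?_⟩
      · rw [Function.update_of_ne (by omega) _ x]
        exact hx0
      · intro m hm'
        by_cases hmk : m = k
        · subst hmk
          rw [Function.update_self, Function.update_self,
            Function.update_of_ne (by omega) _ x]
        · have hmk2 : m < k := by omega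
          rw [Function.update_of_ne (by omega) _ x, Function.update_of_ne (by omega) _ x,
            Function.update_of_ne (by omega) _ u]
          exact hch m hmk2
      · have heq : (fun i : Fin (k+1) => Function.update x (k+1) (A *ᵥ x k + B *ᵥ w) ((i:ℕ)+1))
            = Fin.snoc (fun i : Fin k => x ((i:ℕ)+1)) (A *ᵥ x k + B *ᵥ w) := by
          funext i
          refine Fin.lastCases ?_ ?_ i
          · rw [Fin.snoc_last]
            simp [Fin.val_last, Function.update_self]
          · intro j
            rw [Fin.snoc_castSucc]
            have hj : ((j.castSucc : Fin (k+1)) : ℕ) = (j : ℕ) := rfl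
            rw [Function.update_of_ne]
            · simp [hj]
            · have := j.isLt
              omega
        rw [heq]
        rw [linearIndependent_fin_snoc]
        exact ⟨hli, hw⟩
  -- assemble: a basis out of the chain, the preliminary feedback F
  obtain ⟨x, u, hx0, hch, hli⟩ := hchain n le_rfl
  let bas : Module.Basis (Fin n) ℝ (Fin n → ℝ) := basisOfLinearIndependentOfCardEqFinrank hli hfin
  have hbas : ⇑bas = fun i : Fin n => x ((i:ℕ)+1) :=
    coe_basisOfLinearIndependentOfCardEqFinrank hli hfin
  set G : (Fin n → ℝ) →ₗ[ℝ] (Fin p → ℝ) :=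
    bas.constr ℝ (fun i : Fin n => if ((i:ℕ)+1) < n then u ((i:ℕ)+2) else 0) with hG_def
  set F : Matrix (Fin p) (Fin n) ℝ := LinearMap.toMatrix' G with hF_def
  have hF : ∀ w, F *ᵥ w = G w := by
    intro w
    rw [hF_def, ← Matrix.toLin'_apply, Matrix.toLin'_toMatrix']
  set A' := A + B * F with hA'_def
  have hGx : ∀ i : ℕ, i + 1 < n → G (x (i+1)) = u (i+2) := by
    intro i hi
    have h := bas.constr_basis ℝ
      (fun i : Fin n => if ((i:ℕ)+1) < n then u ((i:ℕ)+2) else 0) ⟨i, by omega⟩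
    rw [hG_def]
    have h2 : bas ⟨i, by omega⟩ = x (i+1) := by rw [hbas]
    rw [h2] at h
    rw [h, if_pos hi]
  have hpow : ∀ i, i < n → (A' ^ i) *ᵥ (x 1) = x (i+1) := by
    intro i
    induction i with
    | zero => intro _; rw [pow_zero, Matrix.one_mulVec]
    | succ i ih =>
      intro hi
      rw [pow_succ', ← Matrix.mulVec_mulVec, ih (by omega), hA'_def, Matrix.add_mulVec,
        ← Matrix.mulVec_mulVec, hF, hGx i hi, ← hch (i+1) hi]
  have hvspan : ⊤ ≤ Submodule.span ℝ
      (Set.range fun i : Fin n => (A' ^ (i:ℕ)) *ᵥ (x 1)) := by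
    have hxspan : Submodule.span ℝ (Set.range fun i : Fin n => x ((i:ℕ)+1)) = ⊤ := by
      rw [← hbas]
      exact bas.span_eq
    have hfun : (fun i : Fin n => (A' ^ (i:ℕ)) *ᵥ (x 1)) = fun i : Fin n => x ((i:ℕ)+1) := by
      funext i
      exact hpow (i : ℕ) i.isLt
    rw [hfun, hxspan]
  obtain ⟨f, hf⟩ := single_input hn A' (x 1) hvspan χ hm hd
  refine ⟨F + vecMulVec (u 1) f, ?_⟩
  have hBv : B * vecMulVec (u 1) f = vecMulVec (B *ᵥ u 1) f := by
    ext i j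
    simp only [Matrix.mul_apply, vecMulVec_apply, Matrix.mulVec, dotProduct,
      Finset.sum_mul, mul_assoc]
  have hv1 : B *ᵥ u 1 = x 1 := by
    have h := hch 0 hn
    rw [hx0] at h
    simpa using h.symm
  rw [Matrix.mul_add, ← add_assoc, hBv, hv1, ← hA'_def]
  exact hf

end PoleShift

namespace PoleShift

lemma reverse {n p : ℕ} (hn : 0 < n) (A : Matrix (Fin n) (Fin n) ℝ)
    (B : Matrix (Fin n) (Fin p) ℝ)
    (hass : ∀ χ : Polynomial ℝ, χ.Monic → χ.natDegree = n →
      ∃ F : Matrix (Fin p) (Fin n) ℝ, (A + B * F).charpoly = χ) :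
    (kalmanMatrix A B).rank = n := by
  by_contra hrank
  have hrlt : (kalmanMatrix A B).rank < n := by
    have h := (kalmanMatrix A B).rank_le_card_height
    rw [Fintype.card_fin] at h
    omega
  set R := Submodule.span ℝ
    {x : Fin n → ℝ | ∃ (k : ℕ) (w : Fin p → ℝ), x = (A ^ k) *ᵥ (B *ᵥ w)} with hR_def
  have hRB : ∀ w, B *ᵥ w ∈ R := fun w =>
    Submodule.subset_span ⟨0, w, by rw [pow_zero, Matrix.one_mulVec]⟩
  have hRA : ∀ y ∈ R, A *ᵥ y ∈ R := by
    intro y hy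
    induction hy using Submodule.span_induction with
    | mem z hz =>
      obtain ⟨k, w, rfl⟩ := hz
      exact Submodule.subset_span ⟨k+1, w, by rw [pow_succ', Matrix.mulVec_mulVec]⟩
    | zero => simp
    | add y z _ _ hy hz => rw [Matrix.mulVec_add]; exact R.add_mem hy hz
    | smul c y _ hy => rw [Matrix.mulVec_smul]; exact R.smul_mem c hy
  -- R is contained in the column span of the Kalman matrix, hence proper
  have hAdeg : A.charpoly.natDegree = n := by
    rw [Matrix.charpoly_natDegree_eq_dim, Fintype.card_fin]
  have hRle : R ≤ Submodule.span ℝ (Set.range (kalmanMatrix A B)ᵀ) := by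
    refine Submodule.span_le.mpr ?_
    rintro y ⟨k, w, rfl⟩
    have hAk : A ^ k = aeval A (X ^ k %ₘ A.charpoly) := Matrix.pow_eq_aeval_mod_charpoly A k
    have hdeglt : (X ^ k %ₘ A.charpoly).natDegree < n := by
      by_cases h0 : (X ^ k %ₘ A.charpoly) = 0
      · rw [h0]; simpa using hn
      · have h2 := Polynomial.degree_modByMonic_lt (X ^ k) (Matrix.charpoly_monic A)
        have h3 : A.charpoly.degree = (n : ℕ) := by
          rw [Polynomial.degree_eq_natDegree (Matrix.charpoly_monic A).ne_zero, hAdeg]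
        rw [h3] at h2
        exact (Polynomial.natDegree_lt_iff_degree_lt h0).mpr h2
    have hsum : A ^ k = ∑ i ∈ Finset.range n, (X ^ k %ₘ A.charpoly).coeff i • A ^ i := by
      rw [hAk]
      exact Polynomial.aeval_eq_sum_range' hdeglt A
    rw [hsum, sum_mulVec]
    refine Submodule.sum_mem _ fun i hi => ?_
    rw [smul_mulVec]
    refine Submodule.smul_mem _ _ ?_
    -- A^i *ᵥ (B *ᵥ w) is in the span of Kalman columns
    have hmem : (A ^ i * B) *ᵥ w ∈ Submodule.span ℝ (Set.range (A ^ i * B)ᵀ) := by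
      show _ ∈ Submodule.span ℝ (Set.range (A ^ i * B).col)
      rw [← Matrix.range_mulVecLin]
      exact ⟨w, rfl⟩
    rw [Matrix.mulVec_mulVec]
    refine Submodule.span_le.mpr ?_ hmem
    rintro z ⟨j, rfl⟩
    refine Submodule.subset_span ⟨(⟨i, Finset.mem_range.mp hi⟩, j), ?_⟩
    ext l
    simp [kalmanMatrix, Matrix.transpose_apply]
  have hRne : R ≠ ⊤ := by
    intro htop
    have h1 : n ≤ Module.finrank ℝ R := by
      rw [htop, finrank_top, Module.finrank_fintype_fun_eq_card, Fintype.card_fin]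
    have h2 : Module.finrank ℝ R ≤
        Module.finrank ℝ (Submodule.span ℝ (Set.range (kalmanMatrix A B)ᵀ)) :=
      Submodule.finrank_mono hRle
    have h3 : (kalmanMatrix A B).rank
        = Module.finrank ℝ (Submodule.span ℝ (Set.range (kalmanMatrix A B)ᵀ)) := by
      rw [Matrix.rank, Matrix.range_mulVecLin]; rfl
    omega
  -- pass to the quotient
  have hle : R ≤ R.comap A.mulVecLin := fun y hy => hRA y hy
  set Abar : ((Fin n → ℝ) ⧸ R) →ₗ[ℝ] ((Fin n → ℝ) ⧸ R) := Submodule.mapQ R R A.mulVecLin hle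
    with hAbar_def
  haveI : Nontrivial ((Fin n → ℝ) ⧸ R) :=
    Submodule.Quotient.nontrivial_iff.mpr hRne
  have hint : IsIntegral ℝ Abar :=
    ⟨Abar.charpoly, Abar.charpoly_monic, by
      rw [← Polynomial.aeval_def]
      exact Abar.aeval_self_charpoly⟩
  set μ := minpoly ℝ Abar with hμ_def
  have hμpos : 0 < μ.natDegree := minpoly.natDegree_pos hint
  have hμ0 : μ ≠ 0 := minpoly.ne_zero hint
  obtain ⟨c, hc⟩ : ∃ c : ℝ, μ.eval c ≠ 0 := by
    have h := μ.exists_eval_ne_zero_of_natDegree_lt_card hμ0 ?_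
    · exact h
    · exact lt_of_lt_of_le (Cardinal.nat_lt_aleph0 _) (Cardinal.aleph0_le_mk ℝ)
  obtain ⟨F, hF⟩ := hass ((X - C c) ^ n) ((monic_X_sub_C c).pow n)
    (by rw [Polynomial.natDegree_pow, Polynomial.natDegree_X_sub_C, mul_one])
  -- the induced map on the quotient commutes with A + B*F
  set g := (A + B * F).mulVecLin with hg_def
  have hcomm : ∀ y : Fin n → ℝ, Abar (R.mkQ y) = R.mkQ (g y) := by
    intro y
    have h0 : Abar (R.mkQ y) = R.mkQ (A *ᵥ y) := by
      rw [hAbar_def, Submodule.mkQ_apply, Submodule.mapQ_apply, Matrix.mulVecLin_apply,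
        Submodule.mkQ_apply]
    have h1 : g y = A *ᵥ y + B *ᵥ (F *ᵥ y) := by
      rw [hg_def, Matrix.mulVecLin_apply, Matrix.add_mulVec, ← Matrix.mulVec_mulVec]
    have h2 : R.mkQ (B *ᵥ (F *ᵥ y)) = 0 := by
      rw [Submodule.mkQ_apply, Submodule.Quotient.mk_eq_zero]
      exact hRB _
    rw [h0, h1, map_add, h2, add_zero]
  have hpowcomm : ∀ (k : ℕ) (y : Fin n → ℝ), (Abar ^ k) (R.mkQ y) = R.mkQ ((g ^ k) y) := by
    intro k
    induction k with
    | zero => intro y; simp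
    | succ k ih =>
      intro y
      rw [pow_succ, pow_succ, Module.End.mul_apply, Module.End.mul_apply, hcomm y, ih (g y)]
  have haev : ∀ y : Fin n → ℝ,
      (aeval Abar ((A + B * F).charpoly)) (R.mkQ y) = R.mkQ ((aeval g ((A + B * F).charpoly)) y) := by
    intro y
    rw [Polynomial.aeval_eq_sum_range (p := (A + B * F).charpoly) Abar,
      Polynomial.aeval_eq_sum_range (p := (A + B * F).charpoly) g]
    rw [LinearMap.sum_apply, LinearMap.sum_apply, map_sum]
    refine Finset.sum_congr rfl fun i _ => ?_
    rw [LinearMap.smul_apply, LinearMap.smul_apply, hpowcomm i y, ← _root_.map_smul]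
  have hg0 : aeval g ((A + B * F).charpoly) = 0 := by
    rw [hg_def, ← Matrix.toLin'_apply']
    have h := Polynomial.aeval_algHom_apply (Matrix.toLinAlgEquiv' (n := Fin n) (R := ℝ)).toAlgHom
      (A + B * F) ((A + B * F).charpoly)
    have h2 : (Matrix.toLinAlgEquiv' (n := Fin n) (R := ℝ)).toAlgHom (A + B * F)
        = Matrix.toLin' (A + B * F) := rfl
    rw [h2] at h
    rw [h, Matrix.aeval_self_charpoly, map_zero]
  have hAbar0 : aeval Abar ((A + B * F).charpoly) = 0 := by
    refine LinearMap.ext fun z => ?_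
    obtain ⟨y, rfl⟩ := R.mkQ_surjective z
    rw [haev, hg0]
    simp
  have hdvd : μ ∣ (X - C c) ^ n := by
    rw [← hF]
    exact minpoly.dvd ℝ Abar hAbar0
  obtain ⟨i, hin, hassoc⟩ := (dvd_prime_pow (Polynomial.prime_X_sub_C c) n).mp hdvd
  have hμeq : μ = (X - C c) ^ i :=
    Polynomial.eq_of_monic_of_associated (minpoly.monic hint) ((monic_X_sub_C c).pow i) hassoc
  have hipos : 0 < i := by
    by_contra h0
    push_neg at h0
    interval_cases i
    · rw [pow_zero] at hμeq
      rw [hμeq] at hμpos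
      simp at hμpos
  apply hc
  rw [hμeq]
  simp [Polynomial.eval_pow, hipos.ne']

end PoleShift

/-- **Pole-Shifting Theorem.** The pair `(A,B)` is controllable if and
only if every monic real polynomial of degree `n` is assignable to `(A,B)`: there exists
`F ∈ ℝ^{p×n}` with `charpoly (A + BF) = χ`. -/
theorem statement_17 (n p : ℕ) (A : Matrix (Fin n) (Fin n) ℝ)
    (B : Matrix (Fin n) (Fin p) ℝ) :
    (kalmanMatrix A B).rank = n ↔
      ∀ χ : Polynomial ℝ, χ.Monic → χ.natDegree = n →
        ∃ F : Matrix (Fin p) (Fin n) ℝ, (A + B * F).charpoly = χ := by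
  rcases Nat.eq_zero_or_pos n with h0 | hn
  · subst h0
    constructor
    · intro _ χ hm hd
      refine ⟨(0 : Matrix (Fin p) (Fin 0) ℝ), ?_⟩
      have h1 : (A + B * (0 : Matrix (Fin p) (Fin 0) ℝ)).charpoly = 1 := by
        rw [Matrix.charpoly, Matrix.det_isEmpty]
      have h2 : χ = Polynomial.C (χ.coeff 0) := Polynomial.eq_C_of_natDegree_eq_zero hd
      have h3 : χ.coeff 0 = 1 := by
        have h := hm.coeff_natDegree
        rwa [hd] at h
      rw [h1, h2, h3, Polynomial.C_1]
    · intro _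
      have h := (kalmanMatrix A B).rank_le_card_height
      simpa using h
  · exact ⟨fun hrank χ hm hd => PoleShift.forward hn A B hrank χ hm hd,
      fun hass => PoleShift.reverse hn A B hass⟩
end

section
/- Let (A, b) and (Ã, b̃) be two pairs in ℝ^{n×n} × ℝ^{n×1}, and assume both pairs are controllable. Then (A,b) is similar to (Ã,b̃), i.e., there exists an invertible T ∈ ℝ^{n×n} with T^{−1} A T = Ã and T^{−1} b = b̃, if and only if the characteristic polynomials of A and Ã coincide: det(sI − A) = det(sI − Ã). -/
open Matrix

/-- The Kalman matrix `[b, Ab, …, A^{n−1}b]` of a single-input pair `(A, b)`. -/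
noncomputable def kalmanMatrix1 {n : ℕ} (A : Matrix (Fin n) (Fin n) ℝ)
    (b : Fin n → ℝ) : Matrix (Fin n) (Fin n) ℝ :=
  Matrix.of fun i k => ((A ^ (k : ℕ)).mulVec b) i

open Polynomial in
lemma aux_rank_isUnit {n : ℕ} (M : Matrix (Fin n) (Fin n) ℝ) (h : M.rank = n) :
    IsUnit M.det := by
  rw [← Matrix.isUnit_iff_isUnit_det, ← Matrix.mulVec_surjective_iff_isUnit]
  have : LinearMap.range M.mulVecLin = ⊤ := by
    apply Submodule.eq_top_of_finrank_eq
    simpa [Matrix.rank] using h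
  intro y
  exact (LinearMap.range_eq_top.mp this) y

open Polynomial in
lemma aux_charpoly_conj {n : ℕ} (T A : Matrix (Fin n) (Fin n) ℝ) (hT : IsUnit T.det) :
    (T⁻¹ * A * T).charpoly = A.charpoly := by
  have key : (T.map C) * charmatrix (T⁻¹ * A * T) = charmatrix A * (T.map C) := by
    unfold charmatrix
    simp only [RingHom.mapMatrix_apply, mul_sub, sub_mul]
    refine congrArg₂ (· - ·) ?_ ?_
    · exact (Matrix.scalar_commute (X : ℝ[X]) (fun r => Commute.all _ _) (T.map C)).symm
    · rw [← Matrix.map_mul, ← Matrix.map_mul]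
      congr 1
      rw [← Matrix.mul_assoc, ← Matrix.mul_assoc, Matrix.mul_nonsing_inv _ hT, Matrix.one_mul]
  have hdet : ((T.map C).det) ≠ 0 := by
    have : (T.map C).det = C T.det := ((RingHom.map_det C T).symm)
    rw [this]
    simpa using hT.ne_zero
  have h2 := congrArg Matrix.det key
  rw [Matrix.det_mul, Matrix.det_mul] at h2
  have : (T.map C).det * (T⁻¹ * A * T).charpoly = (T.map C).det * A.charpoly := by
    show (T.map C).det * (T⁻¹ * A * T).charmatrix.det = (T.map C).det * A.charmatrix.det
    rw [h2, mul_comm]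
  exact mul_left_cancel₀ hdet this

open Polynomial in
/-- The companion-type matrix attached to a monic polynomial. -/
noncomputable def auxCompanion (n : ℕ) (p : ℝ[X]) : Matrix (Fin n) (Fin n) ℝ :=
  Matrix.of fun i k => if (k : ℕ) + 1 = n then -p.coeff i
    else if (i : ℕ) = (k : ℕ) + 1 then 1 else 0

open Polynomial in
lemma aux_kalman_mul {n : ℕ} (A : Matrix (Fin n) (Fin n) ℝ) (b : Fin n → ℝ) :
    A * kalmanMatrix1 A b = kalmanMatrix1 A b * auxCompanion n A.charpoly := by
  have hCH : (A ^ n : Matrix (Fin n) (Fin n) ℝ) =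
      ∑ j : Fin n, (-(A.charpoly.coeff j)) • A ^ (j : ℕ) := by
    have h0 := Matrix.aeval_self_charpoly A
    rw [Polynomial.aeval_eq_sum_range, A.charpoly_natDegree_eq_dim, Fintype.card_fin,
      Finset.sum_range_succ] at h0
    have hcn : A.charpoly.coeff n = 1 := by
      have := A.charpoly_monic.coeff_natDegree
      rwa [A.charpoly_natDegree_eq_dim, Fintype.card_fin] at this
    rw [hcn, one_smul] at h0
    have h1 : (A ^ n : Matrix (Fin n) (Fin n) ℝ)
        = -∑ i ∈ Finset.range n, A.charpoly.coeff i • A ^ i := by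
      rw [eq_neg_iff_add_eq_zero, add_comm]; exact h0
    rw [h1, ← Finset.sum_neg_distrib, ← Fin.sum_univ_eq_sum_range
      (fun i => -(A.charpoly.coeff i • A ^ i)) n]
    simp [neg_smul]
  ext i k
  rw [Matrix.mul_apply, Matrix.mul_apply]
  have hL : ∑ x : Fin n, A i x * kalmanMatrix1 A b x k = ((A ^ ((k:ℕ)+1)) *ᵥ b) i := by
    rw [pow_succ', ← Matrix.mulVec_mulVec]
    simp [kalmanMatrix1, Matrix.mulVec, dotProduct]
  rw [hL]
  by_cases hk : (k : ℕ) + 1 = n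
  · simp only [kalmanMatrix1, auxCompanion, Matrix.of_apply, hk, if_pos]
    have hv : ((A ^ n) *ᵥ b) i
        = ∑ j : Fin n, (A ^ (j:ℕ) *ᵥ b) i * (-A.charpoly.coeff j) := by
      rw [hCH]
      simp [Matrix.mulVec, dotProduct, Matrix.sum_apply, Finset.sum_mul, Finset.mul_sum,
        mul_comm]
      rw [Finset.sum_comm]
      exact Finset.sum_congr rfl fun x _ => Finset.sum_congr rfl fun y _ => by ring
    exact hv
  · simp only [kalmanMatrix1, auxCompanion, Matrix.of_apply, hk, if_neg, if_false]
    have hk' : (k : ℕ) + 1 < n := lt_of_le_of_ne k.isLt (by simpa using hk)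
    rw [Finset.sum_eq_single (⟨(k:ℕ)+1, hk'⟩ : Fin n)]
    · simp
    · intro j _ hj
      have : (j : ℕ) ≠ (k : ℕ) + 1 := fun h => hj (Fin.ext h)
      simp [this]
    · intro h; exact absurd (Finset.mem_univ _) h

/-- Let `(A, b)` and `(Ã, b̃)` be controllable single-input pairs. Then
`(A,b)` is similar to `(Ã,b̃)` (i.e. `T⁻¹AT = Ã` and `T⁻¹b = b̃` for some invertible `T`)
if and only if `A` and `Ã` have the same characteristic polynomial. -/
theorem statement_18 (n : ℕ) (A Atilde : Matrix (Fin n) (Fin n) ℝ)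
    (b btilde : Fin n → ℝ)
    (hc : (kalmanMatrix1 A b).rank = n)
    (hct : (kalmanMatrix1 Atilde btilde).rank = n) :
    (∃ T : Matrix (Fin n) (Fin n) ℝ, IsUnit T.det ∧
        T⁻¹ * A * T = Atilde ∧ T⁻¹.mulVec b = btilde) ↔
      A.charpoly = Atilde.charpoly := by
  obtain _ | m := n
  · constructor
    · intro _
      have : A = Atilde := by ext i; exact i.elim0
      rw [this]
    · intro _
      exact ⟨1, by simp, by ext i; exact i.elim0, funext fun i => i.elim0⟩
  constructor
  · rintro ⟨T, hT, h1, h2⟩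
    rw [← h1, aux_charpoly_conj _ _ hT]
  · intro hcp
    set K := kalmanMatrix1 A b with hKdef
    set Kt := kalmanMatrix1 Atilde btilde with hKtdef
    have hK : IsUnit K.det := aux_rank_isUnit _ hc
    have hKt : IsUnit Kt.det := aux_rank_isUnit _ hct
    refine ⟨K * Kt⁻¹, ?_, ?_, ?_⟩
    · rw [Matrix.det_mul]
      exact hK.mul (Matrix.isUnit_nonsing_inv_det _ hKt)
    · rw [Matrix.mul_inv_rev, Matrix.nonsing_inv_nonsing_inv _ hKt]
      have h1 : A * K = K * auxCompanion (m+1) A.charpoly := aux_kalman_mul A b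
      have h2 : Atilde * Kt = Kt * auxCompanion (m+1) A.charpoly := by
        rw [hcp]; exact aux_kalman_mul Atilde btilde
      calc Kt * K⁻¹ * A * (K * Kt⁻¹)
          = Kt * (K⁻¹ * (A * K)) * Kt⁻¹ := by
            simp only [Matrix.mul_assoc]
        _ = Kt * auxCompanion (m+1) A.charpoly * Kt⁻¹ := by
            rw [h1, ← Matrix.mul_assoc K⁻¹, Matrix.nonsing_inv_mul _ hK, Matrix.one_mul]
        _ = Atilde * (Kt * Kt⁻¹) := by rw [← h2]; simp only [Matrix.mul_assoc]
        _ = Atilde := by rw [Matrix.mul_nonsing_inv _ hKt, Matrix.mul_one]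
    · rw [Matrix.mul_inv_rev, Matrix.nonsing_inv_nonsing_inv _ hKt]
      have hb : K *ᵥ Pi.single (0 : Fin (m+1)) (1 : ℝ) = b := by
        funext i
        simp [Matrix.mulVec_single, hKdef, kalmanMatrix1]
      have hbt : Kt *ᵥ Pi.single (0 : Fin (m+1)) (1 : ℝ) = btilde := by
        funext i
        simp [Matrix.mulVec_single, hKtdef, kalmanMatrix1]
      rw [← hb, Matrix.mulVec_mulVec, Matrix.mul_assoc,
        Matrix.nonsing_inv_mul _ hK, Matrix.mul_one, hbt]
end
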